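/- arXiv:2403.09650 — 2 statements merged into one kernel-verified Lean document; each statement's English description precedes it below -/
import Mathlib

section
/- Let $\{u_i\}_{i=0}^{m}$ be a sequence of closed bounded intervals with $u_m = [0,0]$, let $n \le m-1$, and let $\lambda_1, \lambda_2 \geq 1$ be natural numbers. If both endpoint sequences $\underline{u_i}$ and $\overline{u_i}$ are monotone (both non-decreasing or both non-increasing) and the length $\mathrm{len}(u_i)$ is non-increasing in $i$, then $\sum_{i=n}^{m-1} \|u_i^{\lambda_1}(\nabla u_i)^{\lambda_2}\| \leq \frac{\lambda_2 (m-n+1)^{\lambda_1}}{\lambda_1 + \lambda_2} \sum_{i=n}^{m} \|\nabla u_i\|^{\lambda_1 + \lambda_2}$, where $\|\cdot\|$ is the interval quasi-norm. -/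
/-- gH-difference of intervals given by endpoint pairs. -/
def gH (u v : ℝ × ℝ) : ℝ × ℝ :=
  (min (u.1 - v.1) (u.2 - v.2), max (u.1 - v.1) (u.2 - v.2))

/-- Interval multiplication. -/
def imul (u v : ℝ × ℝ) : ℝ × ℝ :=
  (min (min (u.1 * v.1) (u.1 * v.2)) (min (u.2 * v.1) (u.2 * v.2)),
   max (max (u.1 * v.1) (u.1 * v.2)) (max (u.2 * v.1) (u.2 * v.2)))

/-- Power of an interval, as the image interval `{t^k : t ∈ u}`. -/
noncomputable def ipowI (u : ℝ × ℝ) (k : ℕ) : ℝ × ℝ :=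
  (sInf ((fun t : ℝ => t ^ k) '' Set.Icc u.1 u.2),
   sSup ((fun t : ℝ => t ^ k) '' Set.Icc u.1 u.2))

/-- Quasi-norm of an interval. -/
def inorm (u : ℝ × ℝ) : ℝ := max |u.1| |u.2|

/-!
The interval quasi-norm is submultiplicative for the interval product, `‖u ^ k‖ ≤ ‖u‖ ^ k`, and,
since `u_m = [0, 0]`, both endpoints of `u_i` are bounded by the variation `∑_{j > i} ‖∇u_j‖`.
This reduces the claim to the discrete Opial inequality for `a_j = ‖∇u_j‖`:
`∑_{i=n}^{m-1} (∑_{j=i+1}^m a_j)^p a_i^q ≤ q (m - n + 1)^p / (p + q) · ∑_{i=n}^m a_i^(p+q)`.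

For it, let `P = p + q` and `C_i = ∑_{j=i}^m a_j^P`. The power mean inequality gives
`(∑_{j>i} a_j)^p ≤ ((m - i)^(P-1) C_{i+1})^(p/P)`, and convexity of `t ↦ t^(P/q)` gives
`C_{i+1}^(p/P) (C_i - C_{i+1})^(q/P) ≤ ((q/P) (C_i^(P/q) - C_{i+1}^(P/q)))^(q/P)`.
Hölder's inequality with exponents `P/p` and `P/q` splits the sum of the products; the second
factor telescopes to at most `(q/P) C_n^(P/q)` and the first is `∑_{k=1}^{m-n} k^(P-1)`, which is
at most `(m - n + 1)^P / P`, again by convexity.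
-/

open Finset

lemma inorm_nonneg (u : ℝ × ℝ) : 0 ≤ inorm u :=
  (abs_nonneg _).trans (le_max_left _ _)

lemma abs_fst_le_inorm (u : ℝ × ℝ) : |u.1| ≤ inorm u := le_max_left _ _

lemma abs_snd_le_inorm (u : ℝ × ℝ) : |u.2| ≤ inorm u := le_max_right _ _

lemma inorm_imul_le (u v : ℝ × ℝ) : inorm (imul u v) ≤ inorm u * inorm v := by
  have hmul {a b : ℝ} (ha : |a| ≤ inorm u) (hb : |b| ≤ inorm v) : |a * b| ≤ inorm u * inorm v :=
    (abs_mul a b).trans_le (mul_le_mul ha hb (abs_nonneg b) (inorm_nonneg u))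
  have hmin {a b C : ℝ} (ha : |a| ≤ C) (hb : |b| ≤ C) : |min a b| ≤ C :=
    abs_min_le_max_abs_abs.trans (max_le ha hb)
  have hmax {a b C : ℝ} (ha : |a| ≤ C) (hb : |b| ≤ C) : |max a b| ≤ C :=
    abs_max_le_max_abs_abs.trans (max_le ha hb)
  have h11 := hmul (abs_fst_le_inorm u) (abs_fst_le_inorm v)
  have h12 := hmul (abs_fst_le_inorm u) (abs_snd_le_inorm v)
  have h21 := hmul (abs_snd_le_inorm u) (abs_fst_le_inorm v)
  have h22 := hmul (abs_snd_le_inorm u) (abs_snd_le_inorm v)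
  exact max_le (hmin (hmin h11 h12) (hmin h21 h22)) (hmax (hmax h11 h12) (hmax h21 h22))

-- `s` may be empty (`ipowI u k` for `u.1 > u.2`): in `ℝ`, `sInf ∅ = sSup ∅ = 0`.
lemma inorm_sInf_sSup_le {s : Set ℝ} {C : ℝ} (hC : 0 ≤ C) (hs : ∀ x ∈ s, |x| ≤ C) :
    inorm (sInf s, sSup s) ≤ C := by
  have hlower : ∀ x ∈ s, -C ≤ x := fun x hx => (abs_le.1 (hs x hx)).1
  have hupper : ∀ x ∈ s, x ≤ C := fun x hx => (abs_le.1 (hs x hx)).2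
  have hinf : -C ≤ sInf s := Real.le_sInf hlower (by linarith)
  have hsup : sSup s ≤ C := Real.sSup_le hupper hC
  have hinf_sup : sInf s ≤ sSup s := Real.sInf_le_sSup s ⟨-C, hlower⟩ ⟨C, hupper⟩
  exact max_le (abs_le.2 ⟨hinf, by linarith⟩) (abs_le.2 ⟨by linarith, hsup⟩)

lemma inorm_ipowI_le (u : ℝ × ℝ) (k : ℕ) : inorm (ipowI u k) ≤ inorm u ^ k := by
  refine inorm_sInf_sSup_le (pow_nonneg (inorm_nonneg u) k) ?_
  rintro _ ⟨t, ht, rfl⟩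
  rw [abs_pow]
  exact pow_le_pow_left₀ (abs_nonneg t) (abs_le_max_abs_abs ht.1 ht.2) k

lemma abs_fst_sub_le_inorm_gH (u v : ℝ × ℝ) : |u.1 - v.1| ≤ inorm (gH u v) := by
  rcases le_total (u.1 - v.1) (u.2 - v.2) with h | h <;> simp [gH, inorm, h]

lemma abs_snd_sub_le_inorm_gH (u v : ℝ × ℝ) : |u.2 - v.2| ≤ inorm (gH u v) := by
  rcases le_total (u.1 - v.1) (u.2 - v.2) with h | h <;> simp [gH, inorm, h]

lemma abs_sub_le_sum_Ioc_abs_sub (f : ℕ → ℝ) {i m : ℕ} (him : i ≤ m) :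
    |f i - f m| ≤ ∑ j ∈ Ioc i m, |f j - f (j - 1)| := by
  induction m, him using Nat.le_induction with
  | base => simp
  | succ m him ih =>
    rw [sum_Ioc_succ_top (by omega), Nat.add_sub_cancel, abs_sub_comm (f (m + 1))]
    exact (abs_sub_le _ _ _).trans (add_le_add_left ih _)

lemma mul_rpow_sub_one_mul_sub_le_rpow_sub_rpow {s x y : ℝ} (hs : 1 ≤ s) (hy : 0 ≤ y)
    (hyx : y ≤ x) : s * y ^ (s - 1) * (x - y) ≤ x ^ s - y ^ s := by
  rcases hyx.eq_or_lt with rfl | hlt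
  · simp
  have hslope := (convexOn_rpow hs).le_slope_of_hasDerivAt (Set.mem_Ici.2 hy)
    (Set.mem_Ici.2 (hy.trans hyx)) hlt (Real.hasDerivAt_rpow_const (Or.inr hs))
  rwa [slope_def_field, le_div_iff₀ (sub_pos.2 hlt)] at hslope

lemma sum_range_rpow_sub_one_le {P : ℝ} (hP : 1 ≤ P) (N : ℕ) :
    ∑ k ∈ range N, (k : ℝ) ^ (P - 1) ≤ (N : ℝ) ^ P / P := by
  have hstep (k : ℕ) : (k : ℝ) ^ (P - 1) * P ≤ ((k + 1 : ℕ) : ℝ) ^ P - (k : ℝ) ^ P := by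
    have := mul_rpow_sub_one_mul_sub_le_rpow_sub_rpow hP (Nat.cast_nonneg k)
      (Nat.cast_le.2 k.le_succ)
    push_cast at this ⊢
    linarith
  rw [le_div_iff₀ (by linarith), sum_mul]
  calc ∑ k ∈ range N, (k : ℝ) ^ (P - 1) * P
      ≤ ∑ k ∈ range N, (((k + 1 : ℕ) : ℝ) ^ P - (k : ℝ) ^ P) := sum_le_sum fun k _ => hstep k
    _ = (N : ℝ) ^ P := by
      rw [sum_range_sub (fun k => (k : ℝ) ^ P), Nat.cast_zero, Real.zero_rpow (by linarith),
        sub_zero]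

lemma sum_Ico_rpow_sub_one_le {P : ℝ} (hP : 1 ≤ P) {n m : ℕ} (hnm : n ≤ m) :
    ∑ i ∈ Ico n m, ((m - i : ℕ) : ℝ) ^ (P - 1) ≤ ((m : ℝ) - n + 1) ^ P / P := by
  rw [sum_Ico_reflect (fun k => (k : ℝ) ^ (P - 1)) n (Nat.le_succ m), Nat.add_sub_cancel_left]
  calc ∑ k ∈ Ico 1 (m + 1 - n), (k : ℝ) ^ (P - 1)
      ≤ ∑ k ∈ range (m + 1 - n), (k : ℝ) ^ (P - 1) :=
        sum_le_sum_of_subset_of_nonneg (fun k hk => by simp at hk ⊢; omega)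
          fun k _ _ => by positivity
    _ ≤ ((m + 1 - n : ℕ) : ℝ) ^ P / P := sum_range_rpow_sub_one_le hP _
    _ = ((m : ℝ) - n + 1) ^ P / P := by rw [Nat.cast_sub (by omega)]; push_cast; ring_nf

lemma sum_rpow_mul_rpow_le {ι : Type*} (s : Finset ι) {x y : ι → ℝ} {α β : ℝ}
    (hα : 0 < α) (hβ : 0 < β) (hαβ : α + β = 1) (hx : ∀ i ∈ s, 0 ≤ x i)
    (hy : ∀ i ∈ s, 0 ≤ y i) :
    ∑ i ∈ s, x i ^ α * y i ^ β ≤ (∑ i ∈ s, x i) ^ α * (∑ i ∈ s, y i) ^ β := by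
  have holder := Real.inner_le_Lp_mul_Lq_of_nonneg s (Real.HolderConjugate.inv_inv hα hβ hαβ)
    (fun i hi => Real.rpow_nonneg (hx i hi) α) (fun i hi => Real.rpow_nonneg (hy i hi) β)
  rwa [one_div, one_div, inv_inv, inv_inv,
    sum_congr rfl fun i hi => Real.rpow_rpow_inv (hx i hi) hα.ne',
    sum_congr rfl fun i hi => Real.rpow_rpow_inv (hy i hi) hβ.ne'] at holder

lemma rpow_mul_sub_rpow_le {p q x y : ℝ} (hp : 0 ≤ p) (hq : 0 < q) (hy : 0 ≤ y) (hyx : y ≤ x) :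
    y ^ (p / (p + q)) * (x - y) ^ (q / (p + q))
      ≤ (q / (p + q) * (x ^ ((p + q) / q) - y ^ ((p + q) / q))) ^ (q / (p + q)) := by
  have hP : 0 < p + q := by linarith
  have hs : 1 ≤ (p + q) / q := by rw [le_div_iff₀ hq]; linarith
  have htangent := mul_rpow_sub_one_mul_sub_le_rpow_sub_rpow hs hy hyx
  rw [show (p + q) / q - 1 = p / q by field_simp; ring] at htangent
  calc y ^ (p / (p + q)) * (x - y) ^ (q / (p + q))
      = (y ^ (p / q) * (x - y)) ^ (q / (p + q)) := by
        rw [Real.mul_rpow (Real.rpow_nonneg hy _) (sub_nonneg.2 hyx), ← Real.rpow_mul hy]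
        field_simp
    _ ≤ _ := by
        refine Real.rpow_le_rpow (by have := sub_nonneg.2 hyx; positivity) ?_ (by positivity)
        calc y ^ (p / q) * (x - y) = q / (p + q) * ((p + q) / q * y ^ (p / q) * (x - y)) := by
              field_simp
          _ ≤ _ := by gcongr

lemma rpow_div_mul_rpow_le {p q M C : ℝ} (hp : 0 < p) (hq : 1 ≤ q) (hM : 0 ≤ M) (hC : 0 ≤ C) :
    (M ^ (p + q) / (p + q)) ^ (p / (p + q)) * (q / (p + q) * C ^ ((p + q) / q)) ^ (q / (p + q))
      ≤ q * M ^ p / (p + q) * C := by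
  have hq0 : 0 < q := by linarith
  have hP : 0 < p + q := by linarith
  have hPsplit : (p + q) ^ (p / (p + q)) * (p + q) ^ (q / (p + q)) = p + q := by
    rw [← Real.rpow_add hP, ← add_div, div_self hP.ne', Real.rpow_one]
  have hqpow : q ^ (q / (p + q)) ≤ q := by
    simpa using Real.rpow_le_rpow_of_exponent_le hq (show q / (p + q) ≤ 1 by
      rw [div_le_one hP]; linarith)
  calc (M ^ (p + q) / (p + q)) ^ (p / (p + q)) * (q / (p + q) * C ^ ((p + q) / q)) ^ (q / (p + q))
      = q ^ (q / (p + q)) * M ^ p / (p + q) * C := by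
        rw [Real.div_rpow (by positivity) hP.le, Real.mul_rpow (by positivity) (by positivity),
          Real.div_rpow hq0.le hP.le, ← Real.rpow_mul hM, ← Real.rpow_mul hC,
          mul_div_cancel₀ _ hP.ne', show (p + q) / q * (q / (p + q)) = 1 by field_simp,
          Real.rpow_one]
        field_simp
        linear_combination -(M ^ p * C) * hPsplit
    _ ≤ q * M ^ p / (p + q) * C := by gcongr

lemma rpow_mul_rpow_le_of_rpow_le_mul {p q S d K x y : ℝ} (hp : 0 < p) (hq : 0 < q)
    (hS : 0 ≤ S) (hd : 0 ≤ d) (hK : 0 ≤ K) (hy : 0 ≤ y) (hSK : S ^ (p + q) ≤ K * y)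
    (hdxy : d ^ (p + q) = x - y) :
    S ^ p * d ^ q ≤ K ^ (p / (p + q))
      * (q / (p + q) * (x ^ ((p + q) / q) - y ^ ((p + q) / q))) ^ (q / (p + q)) := by
  have hP : 0 < p + q := by linarith
  have hyx : y ≤ x := by linarith [Real.rpow_nonneg hd (p + q)]
  calc S ^ p * d ^ q = (S ^ (p + q)) ^ (p / (p + q)) * (d ^ (p + q)) ^ (q / (p + q)) := by
        rw [← Real.rpow_mul hS, ← Real.rpow_mul hd]; field_simp
    _ ≤ (K * y) ^ (p / (p + q)) * (x - y) ^ (q / (p + q)) := by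
        rw [hdxy]; gcongr
    _ = K ^ (p / (p + q)) * (y ^ (p / (p + q)) * (x - y) ^ (q / (p + q))) := by
        rw [Real.mul_rpow hK hy]; ring
    _ ≤ _ := by
        gcongr
        exact rpow_mul_sub_rpow_le hp.le hq hy hyx

lemma sum_rpow_sum_Ioc_mul_rpow_le (a : ℕ → ℝ) (ha : ∀ j, 0 ≤ a j) {p q : ℝ} (hp : 0 < p)
    (hq : 0 < q) (hpq : 1 ≤ p + q) {n m : ℕ} (hnm : n ≤ m) :
    ∑ i ∈ Ico n m, (∑ j ∈ Ioc i m, a j) ^ p * a i ^ q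
      ≤ (∑ i ∈ Ico n m, ((m - i : ℕ) : ℝ) ^ (p + q - 1)) ^ (p / (p + q))
        * (q / (p + q) * (∑ i ∈ Icc n m, a i ^ (p + q)) ^ ((p + q) / q)) ^ (q / (p + q)) := by
  set P := p + q
  have hP : 0 < P := by linarith
  set C : ℕ → ℝ := fun i => ∑ j ∈ Icc i m, a j ^ P with hCdef
  have hC_nonneg (i : ℕ) : 0 ≤ C i := sum_nonneg fun j _ => Real.rpow_nonneg (ha j) P
  have hC_succ {i : ℕ} (him : i ≤ m) : C i = a i ^ P + C (i + 1) := by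
    simp only [hCdef, ← sum_Ioc_add_eq_sum_Icc him, Icc_add_one_left_eq_Ioc, add_comm]
  set Y : ℕ → ℝ := fun i => q / P * (C i ^ (P / q) - C (i + 1) ^ (P / q))
  have hY_nonneg : ∀ i ∈ Ico n m, 0 ≤ Y i := fun i hi => by
    have hC_anti : C (i + 1) ≤ C i := by
      rw [hC_succ (mem_Ico.1 hi).2.le]; linarith [Real.rpow_nonneg (ha i) P]
    have := Real.rpow_le_rpow (hC_nonneg _) hC_anti (by positivity : 0 ≤ P / q)
    exact mul_nonneg (by positivity) (sub_nonneg.2 this)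
  have hterm : ∀ i ∈ Ico n m, (∑ j ∈ Ioc i m, a j) ^ p * a i ^ q
      ≤ (((m - i : ℕ) : ℝ) ^ (P - 1)) ^ (p / P) * Y i ^ (q / P) := fun i hi => by
    have hpower_mean := Real.rpow_sum_le_const_mul_sum_rpow_of_nonneg (s := Ioc i m) hpq
      fun j _ => ha j
    have hC_Ioc : ∑ j ∈ Ioc i m, a j ^ P = C (i + 1) := by
      simp only [hCdef, Icc_add_one_left_eq_Ioc]
    rw [Nat.card_Ioc, hC_Ioc] at hpower_mean
    exact rpow_mul_rpow_le_of_rpow_le_mul hp hq (sum_nonneg fun j _ => ha j) (ha i)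
      (by positivity) (hC_nonneg _) hpower_mean (by rw [hC_succ (mem_Ico.1 hi).2.le]; ring)
  have htelescope : ∑ i ∈ Ico n m, Y i = q / P * (C n ^ (P / q) - C m ^ (P / q)) := by
    rw [← mul_sum, ← neg_sub (C m ^ _), ← sum_Ico_sub (fun i => C i ^ (P / q)) hnm,
      ← sum_neg_distrib]
    simp only [neg_sub]
  calc ∑ i ∈ Ico n m, (∑ j ∈ Ioc i m, a j) ^ p * a i ^ q
      ≤ ∑ i ∈ Ico n m, (((m - i : ℕ) : ℝ) ^ (P - 1)) ^ (p / P) * Y i ^ (q / P) := sum_le_sum hterm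
    _ ≤ (∑ i ∈ Ico n m, ((m - i : ℕ) : ℝ) ^ (P - 1)) ^ (p / P) * (∑ i ∈ Ico n m, Y i) ^ (q / P) :=
        sum_rpow_mul_rpow_le _ (by positivity) (by positivity)
          (by rw [← add_div, div_self hP.ne']) (fun i _ => by positivity) hY_nonneg
    _ ≤ _ := by
        gcongr
        · exact sum_nonneg hY_nonneg
        · rw [htelescope]
          gcongr
          linarith [Real.rpow_nonneg (hC_nonneg m) (P / q)]

theorem discrete_opial_inequality (a : ℕ → ℝ) (ha : ∀ j, 0 ≤ a j) {p q : ℝ} (hp : 0 < p)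
    (hq : 1 ≤ q) {n m : ℕ} (hnm : n ≤ m) :
    ∑ i ∈ Ico n m, (∑ j ∈ Ioc i m, a j) ^ p * a i ^ q
      ≤ q * ((m : ℝ) - n + 1) ^ p / (p + q) * ∑ i ∈ Icc n m, a i ^ (p + q) := by
  have hM : 0 ≤ (m : ℝ) - n + 1 := by
    have : (n : ℝ) ≤ m := by exact_mod_cast hnm
    linarith
  have hC : 0 ≤ ∑ i ∈ Icc n m, a i ^ (p + q) := sum_nonneg fun i _ => Real.rpow_nonneg (ha i) _
  calc ∑ i ∈ Ico n m, (∑ j ∈ Ioc i m, a j) ^ p * a i ^ q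
      ≤ _ := sum_rpow_sum_Ioc_mul_rpow_le a ha hp (by linarith) (by linarith) hnm
    _ ≤ (((m : ℝ) - n + 1) ^ (p + q) / (p + q)) ^ (p / (p + q))
        * (q / (p + q) * (∑ i ∈ Icc n m, a i ^ (p + q)) ^ ((p + q) / q)) ^ (q / (p + q)) := by
        gcongr
        exact sum_Ico_rpow_sub_one_le (by linarith) hnm
    _ ≤ _ := rpow_div_mul_rpow_le hp hq hM hC

theorem interval_opial_mu_decreasing_general
    (n m : ℕ) (lo hi : ℕ → ℝ) (l1 l2 : ℕ)
    (hl1 : 1 ≤ l1) (hl2 : 1 ≤ l2)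
    (hnm : n ≤ m - 1) (hm : 1 ≤ m)
    (hmlo : lo m = 0) (hmhi : hi m = 0) :
    ∑ i ∈ Finset.Icc n (m - 1),
        inorm (imul (ipowI (lo i, hi i) l1)
                    (ipowI (gH (lo i, hi i) (lo (i - 1), hi (i - 1))) l2))
      ≤ ((l2 : ℝ) * ((m : ℝ) - (n : ℝ) + 1) ^ l1) / ((l1 : ℝ) + (l2 : ℝ)) *
        ∑ i ∈ Finset.Icc n m,
          (inorm (gH (lo i, hi i) (lo (i - 1), hi (i - 1)))) ^ (l1 + l2) := by
  set a : ℕ → ℝ := fun j => inorm (gH (lo j, hi j) (lo (j - 1), hi (j - 1)))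
  have hu {i : ℕ} (him : i ≤ m) : inorm (lo i, hi i) ≤ ∑ j ∈ Ioc i m, a j := by
    have hlo := abs_sub_le_sum_Ioc_abs_sub lo him
    have hhi := abs_sub_le_sum_Ioc_abs_sub hi him
    rw [hmlo, sub_zero] at hlo
    rw [hmhi, sub_zero] at hhi
    refine max_le (hlo.trans (sum_le_sum fun j _ => ?_)) (hhi.trans (sum_le_sum fun j _ => ?_))
    · exact abs_fst_sub_le_inorm_gH (lo j, hi j) (lo (j - 1), hi (j - 1))
    · exact abs_snd_sub_le_inorm_gH (lo j, hi j) (lo (j - 1), hi (j - 1))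
  have hterm : ∀ i ∈ Ico n m,
      inorm (imul (ipowI (lo i, hi i) l1) (ipowI (gH (lo i, hi i) (lo (i - 1), hi (i - 1))) l2))
        ≤ (∑ j ∈ Ioc i m, a j) ^ l1 * a i ^ l2 := fun i hmem =>
    (inorm_imul_le _ _).trans <| mul_le_mul
      ((inorm_ipowI_le _ l1).trans
        (pow_le_pow_left₀ (inorm_nonneg _) (hu (mem_Ico.1 hmem).2.le) l1))
      (inorm_ipowI_le _ l2) (inorm_nonneg _) (pow_nonneg (sum_nonneg fun j _ => inorm_nonneg _) l1)
  have hopial := discrete_opial_inequality a (fun j => inorm_nonneg _) (p := l1) (q := l2)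
    (by exact_mod_cast hl1) (by exact_mod_cast hl2) (show n ≤ m by omega)
  rw [Icc_sub_one_right_eq_Ico_of_not_isMin (not_isMin_iff_ne_bot.2 (Nat.one_le_iff_ne_zero.1 hm))]
  exact (sum_le_sum hterm).trans (by exact_mod_cast hopial)

theorem interval_opial_mu_decreasing
    (n m : ℕ) (lo hi : ℕ → ℝ) (l1 l2 : ℕ)
    (hl1 : 1 ≤ l1) (hl2 : 1 ≤ l2)
    (hn : 1 ≤ n) (hnm : n ≤ m - 1) (hm : 1 ≤ m)
    (hvalid : ∀ i ≤ m, lo i ≤ hi i)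
    (hmlo : lo m = 0) (hmhi : hi m = 0)
    (hmono : (∀ i < m, lo i ≤ lo (i + 1) ∧ hi i ≤ hi (i + 1)) ∨
             (∀ i < m, lo (i + 1) ≤ lo i ∧ hi (i + 1) ≤ hi i))
    (hlen : ∀ i < m, hi (i + 1) - lo (i + 1) ≤ hi i - lo i) :
    ∑ i ∈ Finset.Icc n (m - 1),
        inorm (imul (ipowI (lo i, hi i) l1)
                    (ipowI (gH (lo i, hi i) (lo (i - 1), hi (i - 1))) l2))
      ≤ ((l2 : ℝ) * ((m : ℝ) - (n : ℝ) + 1) ^ l1) / ((l1 : ℝ) + (l2 : ℝ)) *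
        ∑ i ∈ Finset.Icc n m,
          (inorm (gH (lo i, hi i) (lo (i - 1), hi (i - 1)))) ^ (l1 + l2) :=
  interval_opial_mu_decreasing_general n m lo hi l1 l2 hl1 hl2 hnm hm hmlo hmhi
end

section
/- Let $\{u_i\}_{i=0}^{n}$ and $\{v_i\}_{i=0}^{n}$ be sequences of closed bounded intervals with $u_0 = v_0 = [0,0]$, such that all endpoint sequences $\underline{u_i}, \overline{u_i}, \underline{v_i}, \overline{v_i}$ are non-decreasing and the lengths $\mathrm{len}(u_i)$ and $\mathrm{len}(v_i)$ are non-decreasing. Then $\sum_{i=1}^{n} \|u_{i-1}\cdot\nabla v_i + v_i\cdot\nabla u_i\| \leq \frac{n}{2} \sum_{i=1}^{n} \big(\|\nabla u_i\|^2 + \|\nabla v_i\|^2\big)$, where $\nabla w_i = w_i \ominus_g w_{i-1}$ and $\|[a,b]\| = \max\{|a|,|b|\}$. -/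
/-- Minkowski addition of intervals. -/
def iadd (u v : ℝ × ℝ) : ℝ × ℝ := (u.1 + v.1, u.2 + v.2)

/-!
If the lower endpoints and the lengths are non-decreasing from `[0, 0]`, every gH-difference
`∇w_i` is the endpointwise difference `[Δw̲_i, Δw̄_i]` with `0 ≤ Δw̲_i ≤ Δw̄_i`, and all intervals
lie in `[0, ∞)`. Interval products are then endpointwise, so the `i`-th summand on the left has
norm `ū_{i-1} Δv̄_i + v̄_i Δū_i = ū_i v̄_i - ū_{i-1} v̄_{i-1}`, and the left side telescopes to
`ū_n v̄_n`. Finally `ū_n v̄_n ≤ (ū_n² + v̄_n²)/2`, and Cauchy–Schwarz gives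
`ū_n² = (∑ Δū_i)² ≤ n ∑ (Δū_i)²`, while `‖∇u_i‖ = Δū_i`.
-/

open Finset

lemma gH_of_sub_le_sub {a b c d : ℝ} (h : a - c ≤ b - d) :
    gH (a, b) (c, d) = (a - c, b - d) := by
  simp [gH, h]

lemma imul_of_nonneg {a b c d : ℝ} (ha : 0 ≤ a) (hab : a ≤ b) (hc : 0 ≤ c) (hcd : c ≤ d) :
    imul (a, b) (c, d) = (a * c, b * d) := by
  have hac_ad : a * c ≤ a * d := by gcongr
  have hbc_bd : b * c ≤ b * d := by gcongr; linarith
  have hac_bc : a * c ≤ b * c := by gcongr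
  have had_bd : a * d ≤ b * d := by gcongr; linarith
  simp [imul, hac_ad, hbc_bd, hac_bc, had_bd]

lemma inorm_of_nonneg {p q : ℝ} (hp : 0 ≤ p) (hpq : p ≤ q) : inorm (p, q) = q := by
  simp [inorm, abs_of_nonneg hp, abs_of_nonneg (hp.trans hpq), hpq]

lemma inorm_gH_of_increasing {a b a' b' : ℝ} (ha : 0 ≤ a' - a) (hab : a' - a ≤ b' - b) :
    inorm (gH (a', b') (a, b)) = b' - b := by
  rw [gH_of_sub_le_sub hab, inorm_of_nonneg ha hab]

lemma inorm_product_rule {a b c d a' b' c' d' : ℝ}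
    (ha : 0 ≤ a) (hab : a ≤ b) (hc' : 0 ≤ c') (hcd' : c' ≤ d')
    (hΔa : 0 ≤ a' - a) (hΔab : a' - a ≤ b' - b) (hΔc : 0 ≤ c' - c) (hΔcd : c' - c ≤ d' - d) :
    inorm (iadd (imul (a, b) (gH (c', d') (c, d))) (imul (c', d') (gH (a', b') (a, b))))
      = b' * d' - b * d := by
  rw [gH_of_sub_le_sub hΔcd, gH_of_sub_le_sub hΔab, imul_of_nonneg ha hab hΔc hΔcd,
    imul_of_nonneg hc' hcd' hΔa hΔab, iadd, inorm_of_nonneg (by positivity)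
      (add_le_add (mul_le_mul hab hΔcd hΔc (ha.trans hab))
        (mul_le_mul hcd' hΔab hΔa (hc'.trans hcd')))]
  ring

lemma nonneg_of_zero_of_le_succ {n : ℕ} {f : ℕ → ℝ} (h0 : f 0 = 0)
    (hf : ∀ i < n, f i ≤ f (i + 1)) : ∀ i ≤ n, 0 ≤ f i
  | 0, _ => h0.ge
  | i + 1, hi => (nonneg_of_zero_of_le_succ h0 hf i (by omega)).trans (hf i (by omega))

lemma sq_le_mul_sum_sq_sub_of_zero {f : ℕ → ℝ} (h0 : f 0 = 0) (n : ℕ) :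
    f n ^ 2 ≤ n * ∑ i ∈ range n, (f (i + 1) - f i) ^ 2 := by
  have h := sq_sum_le_card_mul_sum_sq (s := range n) (f := fun i ↦ f (i + 1) - f i)
  rwa [sum_range_sub, h0, sub_zero, card_range] at h

lemma sum_Icc_one_eq_sum_range {M : Type*} [AddCommMonoid M] (f : ℕ → M) (n : ℕ) :
    ∑ i ∈ Icc 1 n, f i = ∑ i ∈ range n, f (i + 1) := by
  rw [← Ico_add_one_right_eq_Icc, sum_Ico_eq_sum_range]
  simp [add_comm]

section IncreasingIntervals

variable {n : ℕ} {lo hi : ℕ → ℝ}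

structure IsIncreasingFromZero (n : ℕ) (lo hi : ℕ → ℝ) : Prop where
  lo_zero : lo 0 = 0
  hi_zero : hi 0 = 0
  lo_le_succ : ∀ i < n, lo i ≤ lo (i + 1)
  len_le_succ : ∀ i < n, hi i - lo i ≤ hi (i + 1) - lo (i + 1)

namespace IsIncreasingFromZero

lemma lo_nonneg (h : IsIncreasingFromZero n lo hi) {i : ℕ} (hin : i ≤ n) : 0 ≤ lo i :=
  nonneg_of_zero_of_le_succ h.lo_zero h.lo_le_succ i hin

lemma lo_le_hi (h : IsIncreasingFromZero n lo hi) {i : ℕ} (hin : i ≤ n) : lo i ≤ hi i := by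
  have := nonneg_of_zero_of_le_succ (f := fun i ↦ hi i - lo i)
    (by simp [h.lo_zero, h.hi_zero]) h.len_le_succ i hin
  linarith

lemma sub_lo_nonneg (h : IsIncreasingFromZero n lo hi) {i : ℕ} (hin : i < n) :
    0 ≤ lo (i + 1) - lo i :=
  sub_nonneg.2 (h.lo_le_succ i hin)

lemma sub_lo_le_sub_hi (h : IsIncreasingFromZero n lo hi) {i : ℕ} (hin : i < n) :
    lo (i + 1) - lo i ≤ hi (i + 1) - hi i := by
  linarith [h.len_le_succ i hin]

lemma inorm_gH_succ (h : IsIncreasingFromZero n lo hi) {i : ℕ} (hin : i < n) :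
    inorm (gH (lo (i + 1), hi (i + 1)) (lo i, hi i)) = hi (i + 1) - hi i :=
  inorm_gH_of_increasing (h.sub_lo_nonneg hin) (h.sub_lo_le_sub_hi hin)

lemma sq_le_mul_sum_inorm_gH_sq (h : IsIncreasingFromZero n lo hi) :
    hi n ^ 2 ≤ n * ∑ i ∈ range n, inorm (gH (lo (i + 1), hi (i + 1)) (lo i, hi i)) ^ 2 := by
  rw [sum_congr rfl fun i hin ↦ by rw [h.inorm_gH_succ (mem_range.1 hin)]]
  exact sq_le_mul_sum_sq_sub_of_zero h.hi_zero n

end IsIncreasingFromZero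

lemma sum_inorm_product_rule {ulo uhi vlo vhi : ℕ → ℝ} (hu : IsIncreasingFromZero n ulo uhi)
    (hv : IsIncreasingFromZero n vlo vhi) :
    ∑ i ∈ range n,
        inorm (iadd (imul (ulo i, uhi i) (gH (vlo (i + 1), vhi (i + 1)) (vlo i, vhi i)))
          (imul (vlo (i + 1), vhi (i + 1)) (gH (ulo (i + 1), uhi (i + 1)) (ulo i, uhi i))))
      = uhi n * vhi n := by
  rw [sum_congr rfl fun i hin ↦ by
      have hin := mem_range.1 hin
      exact inorm_product_rule (hu.lo_nonneg hin.le) (hu.lo_le_hi hin.le)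
        (hv.lo_nonneg hin) (hv.lo_le_hi hin) (hu.sub_lo_nonneg hin)
        (hu.sub_lo_le_sub_hi hin) (hv.sub_lo_nonneg hin) (hv.sub_lo_le_sub_hi hin),
    sum_range_sub (fun i ↦ uhi i * vhi i), hu.hi_zero, zero_mul, sub_zero]

end IncreasingIntervals

theorem interval_opial_two_sequences_general
    (n : ℕ) (ulo uhi vlo vhi : ℕ → ℝ)
    (hu0 : ulo 0 = 0 ∧ uhi 0 = 0) (hv0 : vlo 0 = 0 ∧ vhi 0 = 0)
    (hulo : ∀ i < n, ulo i ≤ ulo (i + 1))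
    (hvlo : ∀ i < n, vlo i ≤ vlo (i + 1))
    (hulen : ∀ i < n, uhi i - ulo i ≤ uhi (i + 1) - ulo (i + 1))
    (hvlen : ∀ i < n, vhi i - vlo i ≤ vhi (i + 1) - vlo (i + 1)) :
    ∑ i ∈ Finset.Icc 1 n,
        inorm (iadd
          (imul (ulo (i - 1), uhi (i - 1)) (gH (vlo i, vhi i) (vlo (i - 1), vhi (i - 1))))
          (imul (vlo i, vhi i) (gH (ulo i, uhi i) (ulo (i - 1), uhi (i - 1)))))
      ≤ (n : ℝ) / 2 *
        ∑ i ∈ Finset.Icc 1 n,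
          ((inorm (gH (ulo i, uhi i) (ulo (i - 1), uhi (i - 1)))) ^ 2 +
           (inorm (gH (vlo i, vhi i) (vlo (i - 1), vhi (i - 1)))) ^ 2) := by
  have hu : IsIncreasingFromZero n ulo uhi := ⟨hu0.1, hu0.2, hulo, hulen⟩
  have hv : IsIncreasingFromZero n vlo vhi := ⟨hv0.1, hv0.2, hvlo, hvlen⟩
  simp only [sum_Icc_one_eq_sum_range, Nat.add_sub_cancel]
  rw [sum_inorm_product_rule hu hv, sum_add_distrib]
  linarith [two_mul_le_add_sq (uhi n) (vhi n), hu.sq_le_mul_sum_inorm_gH_sq,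
    hv.sq_le_mul_sum_inorm_gH_sq]

theorem interval_opial_two_sequences
    (n : ℕ) (ulo uhi vlo vhi : ℕ → ℝ)
    (huvalid : ∀ i ≤ n, ulo i ≤ uhi i)
    (hvvalid : ∀ i ≤ n, vlo i ≤ vhi i)
    (hu0 : ulo 0 = 0 ∧ uhi 0 = 0) (hv0 : vlo 0 = 0 ∧ vhi 0 = 0)
    (hulo : ∀ i < n, ulo i ≤ ulo (i + 1))
    (huhi : ∀ i < n, uhi i ≤ uhi (i + 1))
    (hvlo : ∀ i < n, vlo i ≤ vlo (i + 1))
    (hvhi : ∀ i < n, vhi i ≤ vhi (i + 1))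
    (hulen : ∀ i < n, uhi i - ulo i ≤ uhi (i + 1) - ulo (i + 1))
    (hvlen : ∀ i < n, vhi i - vlo i ≤ vhi (i + 1) - vlo (i + 1)) :
    ∑ i ∈ Finset.Icc 1 n,
        inorm (iadd
          (imul (ulo (i - 1), uhi (i - 1)) (gH (vlo i, vhi i) (vlo (i - 1), vhi (i - 1))))
          (imul (vlo i, vhi i) (gH (ulo i, uhi i) (ulo (i - 1), uhi (i - 1)))))
      ≤ (n : ℝ) / 2 *
        ∑ i ∈ Finset.Icc 1 n,
          ((inorm (gH (ulo i, uhi i) (ulo (i - 1), uhi (i - 1)))) ^ 2 +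
           (inorm (gH (vlo i, vhi i) (vlo (i - 1), vhi (i - 1)))) ^ 2) :=
  interval_opial_two_sequences_general n ulo uhi vlo vhi hu0 hv0 hulo hvlo hulen hvlen
end
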